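/- Let W = diag(w_1, …, w_n) ∈ M_n(ℂ) and W′ = diag(w′_1, …, w′_m) ∈ M_m(ℂ) be constant diagonal matrices, and let F ∈ M_{m×n}(ℂ[[u]]) satisfy u²·(dF/du) = F·W − W′·F. Then F is constant, i.e. F = F_0 ∈ M_{m×n}(ℂ), and F_0·W = W′·F_0. In particular, every morphism (and every automorphism) between direct sums of one-dimensional E-structures ⊕_j E^{-w_j/u} → ⊕_i E^{-w′_i/u} is independent of u. -/

import Mathlib

/-!
Entrywise the equation reads `u² f' = c f` with `c = w_j - w′_i`. Comparing coefficients of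
`u^(k+1)` gives `c f_(k+1) = k f_k` for all `k`, and at `u⁰` it gives `c f_0 = 0`. If `c = 0`
this forces `f_k = 0` for `k ≥ 1`; if `c ≠ 0`, induction from `c f_1 = 0 · f_0 = 0` does.
-/

open PowerSeries Matrix

noncomputable section

/-- Formal derivative of a power series in `ℂ[[u]]`. -/
def psD (f : PowerSeries ℂ) : PowerSeries ℂ :=
  PowerSeries.mk fun k => ((k : ℂ) + 1) * PowerSeries.coeff (k + 1) f

/-- Entrywise formal derivative of a matrix of power series. -/
def matD {I J : Type*} (M : Matrix I J (PowerSeries ℂ)) : Matrix I J (PowerSeries ℂ) :=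
  Matrix.of fun i j => psD (M i j)

theorem eq_zero_of_mul_succ_eq_natCast_mul {K : Type*} [Semiring K] [NoZeroDivisors K]
    [CharZero K] {c : K} {a : ℕ → K} (h : ∀ k : ℕ, c * a (k + 1) = k * a k) (k : ℕ) :
    a (k + 1) = 0 := by
  by_cases hc : c = 0
  · have hk := h (k + 1)
    rw [hc, zero_mul, Nat.cast_succ] at hk
    exact (mul_eq_zero.mp hk.symm).resolve_left (Nat.cast_add_one_ne_zero k)
  · induction k with
    | zero => simpa [hc] using h 0
    | succ k ih => simpa [hc, ih] using h (k + 1)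

theorem coeff_succ_X_sq_mul_psD (f : PowerSeries ℂ) (k : ℕ) :
    coeff (k + 1) (X ^ 2 * psD f) = k * coeff k f := by
  cases k with
  | zero => simp [coeff_X_pow_mul']
  | succ k => simp [coeff_X_pow_mul', psD]

theorem mul_coeff_zero_eq_zero_of_X_sq_mul_psD_eq {c : ℂ} {f : PowerSeries ℂ}
    (h : X ^ 2 * psD f = C c * f) : c * coeff 0 f = 0 := by
  rw [← coeff_C_mul, ← h]
  simp [coeff_X_pow_mul']

theorem eq_C_coeff_zero_of_X_sq_mul_psD_eq {c : ℂ} {f : PowerSeries ℂ}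
    (h : X ^ 2 * psD f = C c * f) : f = C (coeff 0 f) := by
  have hrec (k : ℕ) : c * coeff (k + 1) f = k * coeff k f := by
    rw [← coeff_C_mul, ← h, coeff_succ_X_sq_mul_psD]
  ext (_ | k)
  · simp
  · simp [eq_zero_of_mul_succ_eq_natCast_mul (a := fun k => coeff k f) hrec k]

theorem X_sq_mul_psD_apply_eq {I J : Type*} [Fintype I] [Fintype J] [DecidableEq I]
    [DecidableEq J] {w : J → ℂ} {w' : I → ℂ} {F : Matrix I J (PowerSeries ℂ)}
    (hF : (X ^ 2 : PowerSeries ℂ) • matD F =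
      F * (diagonal w).map (C : ℂ →+* PowerSeries ℂ) - (diagonal w').map C * F)
    (i : I) (j : J) : X ^ 2 * psD (F i j) = C (w j - w' i) * F i j := by
  have hij := congrFun (congrFun hF i) j
  rw [diagonal_map (map_zero _), diagonal_map (map_zero _)] at hij
  simp only [Matrix.smul_apply, Matrix.sub_apply, mul_diagonal, diagonal_mul, smul_eq_mul, matD,
    of_apply] at hij
  rw [hij, map_sub]
  ring

/-- Morphisms between direct sums of one-dimensional E-structures are constant. -/
theorem morphism_between_sums_of_one_dim_E_structures_is_constant (n m : ℕ)
    (w : Fin n → ℂ) (w' : Fin m → ℂ)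
    (F : Matrix (Fin m) (Fin n) (PowerSeries ℂ))
    (hF : (PowerSeries.X ^ 2 : PowerSeries ℂ) • matD F =
      F * (Matrix.diagonal w).map (PowerSeries.C : ℂ →+* PowerSeries ℂ) -
        (Matrix.diagonal w').map (PowerSeries.C : ℂ →+* PowerSeries ℂ) * F) :
    ∃ F0 : Matrix (Fin m) (Fin n) ℂ,
      F = F0.map (PowerSeries.C : ℂ →+* PowerSeries ℂ) ∧
      F0 * Matrix.diagonal w = Matrix.diagonal w' * F0 := by
  have hentry := X_sq_mul_psD_apply_eq hF
  refine ⟨F.map (coeff 0), ?_, ?_⟩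
  · ext i j : 1
    exact eq_C_coeff_zero_of_X_sq_mul_psD_eq (hentry i j)
  · ext i j
    have hcomm := mul_coeff_zero_eq_zero_of_X_sq_mul_psD_eq (hentry i j)
    simp only [mul_diagonal, diagonal_mul, map_apply]
    linear_combination hcomm

end
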